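/- For every continuously differentiable function z : [0,1] → ℝ with z(0) = 0 one has sup_{x∈[0,1]} |z(x)| ≤ 2 (∫₀¹ z'(x)² dx)^{1/4} (∫₀¹ z(x)² dx)^{1/4}. -/

import Mathlib

open Set MeasureTheory

/-! By the fundamental theorem of calculus, `z x ^ 2 = 2 ∫₀ˣ z z' ≤ 2 ∫₀¹ |z| |z'|`, and the
Cauchy–Schwarz inequality bounds the last integral by `‖z‖ ‖z'‖`; taking square roots gives the
estimate. -/

lemma Continuous.memLp_two_restrict_Ioc {f : ℝ → ℝ} (hf : Continuous f) (a b : ℝ) :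
    MemLp f 2 (volume.restrict (Ioc a b)) :=
  (memLp_two_iff_integrable_sq hf.aestronglyMeasurable).2 (hf.pow 2).integrableOn_Ioc

lemma intervalIntegral.integral_abs_mul_le_sqrt_mul_sqrt {f g : ℝ → ℝ} (hf : Continuous f)
    (hg : Continuous g) {a b : ℝ} (hab : a ≤ b) :
    ∫ y in a..b, |f y| * |g y| ≤ √(∫ y in a..b, f y ^ 2) * √(∫ y in a..b, g y ^ 2) := by
  have holder := integral_mul_norm_le_Lp_mul_Lq Real.HolderConjugate.two_two
    (by simpa using hf.memLp_two_restrict_Ioc a b) (by simpa using hg.memLp_two_restrict_Ioc a b)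
  simp only [Real.norm_eq_abs, Real.rpow_two, sq_abs] at holder
  simpa only [intervalIntegral.integral_of_le hab, Real.sqrt_eq_rpow] using holder

lemma sq_le_two_mul_integral_abs_mul_abs_deriv {z : ℝ → ℝ} (hz : ContDiff ℝ 1 z) {a b x : ℝ}
    (hza : z a = 0) (hx : x ∈ Icc a b) :
    z x ^ 2 ≤ 2 * ∫ y in a..b, |z y| * |deriv z y| := by
  have hz' : Continuous (deriv z) := hz.continuous_deriv le_rfl
  have hprod : Continuous fun y ↦ 2 * z y * deriv z y := by fun_prop
  have hbound : Continuous fun y ↦ 2 * (|z y| * |deriv z y|) := by fun_prop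
  have ftc : z x ^ 2 = ∫ y in a..x, 2 * z y * deriv z y := by
    rw [intervalIntegral.integral_eq_sub_of_hasDerivAt (f := fun y ↦ z y ^ 2)
      (fun y _ ↦ by simpa using (hz.differentiable one_ne_zero y).hasDerivAt.fun_pow 2)
      (hprod.intervalIntegrable _ _), hza]
    ring
  rw [← intervalIntegral.integral_const_mul, ftc]
  calc ∫ y in a..x, 2 * z y * deriv z y
      ≤ ∫ y in a..x, 2 * (|z y| * |deriv z y|) := by
        refine intervalIntegral.integral_mono_on hx.1 (hprod.intervalIntegrable _ _)
          (hbound.intervalIntegrable _ _) fun y _ ↦ ?_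
        rw [mul_assoc, ← abs_mul]
        gcongr
        exact le_abs_self _
    _ ≤ ∫ y in a..b, 2 * (|z y| * |deriv z y|) :=
        intervalIntegral.integral_mono_interval le_rfl hx.1 hx.2
          (Filter.Eventually.of_forall fun y ↦ by positivity) (hbound.intervalIntegrable _ _)

lemma abs_le_two_mul_rpow_quarter_mul_rpow_quarter {t A B : ℝ} (hA : 0 ≤ A) (hB : 0 ≤ B)
    (h : t ^ 2 ≤ 2 * (√A * √B)) : |t| ≤ 2 * (A ^ (1 / 4 : ℝ) * B ^ (1 / 4 : ℝ)) := by
  have sqrt_eq_sq {C : ℝ} (hC : 0 ≤ C) : √C = (C ^ (1 / 4 : ℝ)) ^ 2 := by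
    rw [Real.sqrt_eq_rpow, ← Real.rpow_natCast, ← Real.rpow_mul hC]
    norm_num
  rw [sqrt_eq_sq hA, sqrt_eq_sq hB] at h
  refine abs_le_of_sq_le_sq ?_ (by positivity)
  nlinarith [sq_nonneg (A ^ (1 / 4 : ℝ) * B ^ (1 / 4 : ℝ))]

/-- Gagliardo–Nirenberg interpolation inequality on the unit interval
(Lemma 3.1, second part): case z(0) = 0. -/
theorem gagliardo_nirenberg_unit_interval_zero (z : ℝ → ℝ) (hz : ContDiff ℝ 1 z)
    (hz0 : z 0 = 0) :
    ∀ x ∈ Icc (0:ℝ) 1,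
      |z x| ≤ 2 * ((∫ y in (0:ℝ)..1, (deriv z y)^2) ^ ((1:ℝ)/4) *
        (∫ y in (0:ℝ)..1, (z y)^2) ^ ((1:ℝ)/4)) := by
  intro x hx
  have integral_sq_nonneg (f : ℝ → ℝ) : 0 ≤ ∫ y in (0:ℝ)..1, f y ^ 2 :=
    intervalIntegral.integral_nonneg zero_le_one fun y _ ↦ sq_nonneg _
  refine abs_le_two_mul_rpow_quarter_mul_rpow_quarter (integral_sq_nonneg _)
    (integral_sq_nonneg _) ?_
  calc z x ^ 2 ≤ 2 * ∫ y in (0:ℝ)..1, |deriv z y| * |z y| := by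
        simpa only [mul_comm |z _|] using sq_le_two_mul_integral_abs_mul_abs_deriv hz hz0 hx
    _ ≤ _ := by
        gcongr
        exact intervalIntegral.integral_abs_mul_le_sqrt_mul_sqrt
          (hz.continuous_deriv le_rfl) hz.continuous zero_le_one
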